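/- arXiv:2410.13583 — 2 statements merged into one kernel-verified Lean document; each statement's English description precedes it below -/
import Mathlib

section
/- For all κ > 0, the price of anarchy satisfies (κ/(1 - e^{-κ})) / (1 + κ/2) < 2. -/
open Real

/-- The price of anarchy is bounded by 2:
`(κ/(1-e^{-κ})) / (1 + κ/2) < 2` for all `κ > 0`. -/
theorem stmt_11 (κ : ℝ) (hκ : 0 < κ) :
    (κ / (1 - Real.exp (-κ))) / (1 + κ / 2) < 2 := by
  have h1 : Real.exp (-κ) < 1 := Real.exp_lt_one_iff.mpr (by linarith)
  have h1' : 0 < 1 - Real.exp (-κ) := by linarith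
  have h2 : (0:ℝ) < 1 + κ / 2 := by linarith
  rw [div_lt_iff₀ h2, div_lt_iff₀ h1']
  have h3 : Real.exp (-κ) * Real.exp κ = 1 := by
    rw [← Real.exp_add]; simp
  have h4 : 1 + κ < Real.exp κ := by
    have := Real.add_one_lt_exp (by linarith : κ ≠ 0)
    linarith
  have h5 : 0 < Real.exp (-κ) := Real.exp_pos _
  nlinarith [mul_pos h5 hκ, sq_nonneg κ]
end

section
/- Fix n ≥ 2, κ > 0, α = κ(n-1)/(n+1). In the equilibrium with strategies aᵢ(t) = Bᵢ(e^{κt}-1) + Dᵢ(1-e^{-αt}), the implementation cost of trader i, defined as λᵢ ∫₀¹ (m'(t) + κ m(t)) aᵢ'(t) dt with m(t) = (1-e^{-αt})/(1-e^{-α}), equals κ(λᵢ n - 1)/(n(1 - e^{-κ})) + α/(n(e^α - 1)) + κ/(n+1). -/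
/-!
Both `m' + κ m` and `aᵢ'` are linear combinations of `e^{κt}` and `e^{-αt}`, so the integrand
has an explicit primitive, and the integral is `κ Bᵢ e^κ + Dᵢ (κ + (α - κ)(1 + e^{-α})/2)`.
Multiplying by `λᵢ`, the `Bᵢ` term is the trader-specific part of the cost; in the `Dᵢ` term
`λᵢ` cancels and `α - κ = -2κ/(n+1)` turns it into `α/(n(e^α-1)) + κ/(n+1)`.
-/

open Real intervalIntegral

noncomputable section

namespace ImplementationCost

def marketStrategy (α t : ℝ) : ℝ := (1 - exp (-α * t)) / (1 - exp (-α))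

def traderStrategy (κ α B D t : ℝ) : ℝ := B * (exp (κ * t) - 1) + D * (1 - exp (-α * t))

lemma exp_sub_one_ne_zero {x : ℝ} (hx : x ≠ 0) : exp x - 1 ≠ 0 :=
  sub_ne_zero.mpr (exp_eq_one_iff x |>.not.mpr hx)

lemma one_sub_exp_neg_ne_zero {x : ℝ} (hx : x ≠ 0) : 1 - exp (-x) ≠ 0 :=
  sub_ne_zero.mpr (Ne.symm (exp_eq_one_iff _ |>.not.mpr (neg_ne_zero.mpr hx)))

lemma hasDerivAt_exp_const_mul (c t : ℝ) :
    HasDerivAt (fun x => exp (c * x)) (c * exp (c * t)) t := by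
  simpa [mul_comm] using ((hasDerivAt_id t).const_mul c).exp

lemma hasDerivAt_marketStrategy (α t : ℝ) :
    HasDerivAt (marketStrategy α) (α * exp (-α * t) / (1 - exp (-α))) t :=
  (((hasDerivAt_exp_const_mul (-α) t).const_sub 1).div_const _).congr_deriv (by ring)

lemma hasDerivAt_traderStrategy (κ α B D t : ℝ) :
    HasDerivAt (traderStrategy κ α B D) (B * κ * exp (κ * t) + D * α * exp (-α * t)) t :=
  ((((hasDerivAt_exp_const_mul κ t).sub_const 1).const_mul B).add
    (((hasDerivAt_exp_const_mul (-α) t).const_sub 1).const_mul D)).congr_deriv (by ring)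

-- No coefficient involves a division by `α` or `κ - α`, so this primitive is valid for all `κ, α`.
def costDensityPrimitive (κ α B D t : ℝ) : ℝ :=
  (B * κ * exp (κ * t) - B * κ * exp ((κ - α) * t) - D * κ * exp (-α * t)
    - D * (α - κ) / 2 * exp (-(2 * α) * t)) / (1 - exp (-α))

lemma hasDerivAt_costDensityPrimitive (κ α B D t : ℝ) :
    HasDerivAt (costDensityPrimitive κ α B D)
      ((α * exp (-α * t) / (1 - exp (-α)) + κ * marketStrategy α t)
        * (B * κ * exp (κ * t) + D * α * exp (-α * t))) t := by
  have h := (((((hasDerivAt_exp_const_mul κ t).const_mul (B * κ)).sub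
    ((hasDerivAt_exp_const_mul (κ - α) t).const_mul (B * κ))).sub
    ((hasDerivAt_exp_const_mul (-α) t).const_mul (D * κ))).sub
    ((hasDerivAt_exp_const_mul (-(2 * α)) t).const_mul (D * (α - κ) / 2))).div_const
    (1 - exp (-α))
  refine h.congr_deriv ?_
  rw [marketStrategy, show (κ - α) * t = κ * t + -α * t by ring,
    show -(2 * α) * t = -α * t + -α * t by ring, exp_add, exp_add]
  ring

lemma integral_implementationCost {α : ℝ} (hα : α ≠ 0) (κ B D : ℝ) :
    ∫ t in (0 : ℝ)..1, (deriv (marketStrategy α) t + κ * marketStrategy α t)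
        * deriv (traderStrategy κ α B D) t
      = κ * B * exp κ + D * (κ + (α - κ) * (1 + exp (-α)) / 2) := by
  have hq := one_sub_exp_neg_ne_zero hα
  simp only [(hasDerivAt_marketStrategy α _).deriv, (hasDerivAt_traderStrategy κ α B D _).deriv]
  rw [integral_eq_sub_of_hasDerivAt (fun t _ => hasDerivAt_costDensityPrimitive κ α B D t)
    (by unfold marketStrategy; apply Continuous.intervalIntegrable; fun_prop)]
  simp only [costDensityPrimitive, mul_one, mul_zero, exp_zero]
  rw [show κ - α = κ + -α by ring, show -(2 * α) = -α + -α by ring, exp_add, exp_add]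
  field_simp
  ring

lemma lam_mul_implementationCost_B_term {κ lam N : ℝ} (hκ : κ ≠ 0) (hlam : lam ≠ 0)
    (hN : N ≠ 0) :
    lam * (κ * ((lam * N - 1) / (lam * N * (exp κ - 1))) * exp κ)
      = κ * (lam * N - 1) / (N * (1 - exp (-κ))) := by
  have h := exp_sub_one_ne_zero hκ
  rw [exp_neg]
  field_simp

lemma lam_mul_implementationCost_D_term {κ α N lam : ℝ} (hα : α = κ * (N - 1) / (N + 1))
    (hα0 : α ≠ 0) (hlam : lam ≠ 0) (hN : N ≠ 0) (hN1 : N + 1 ≠ 0) :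
    lam * (1 / (lam * N * (1 - exp (-α))) * (κ + (α - κ) * (1 + exp (-α)) / 2))
      = α / (N * (exp α - 1)) + κ / (N + 1) := by
  have h := exp_sub_one_ne_zero hα0
  rw [exp_neg]
  subst hα
  field_simp
  ring

end ImplementationCost

end

open ImplementationCost in
theorem stmt_13_general (n : ℕ) (hn : 2 ≤ n) (κ : ℝ) (hκ : 0 < κ)
    (α : ℝ) (hα : α = κ * ((n : ℝ) - 1) / ((n : ℝ) + 1))
    (lam : Fin n → ℝ) (hpos : ∀ i, 0 < lam i)
    (B D : Fin n → ℝ)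
    (hB : ∀ i, B i = (lam i * n - 1) / (lam i * n * (Real.exp κ - 1)))
    (hD : ∀ i, D i = 1 / (lam i * n * (1 - Real.exp (-α))))
    (a : Fin n → ℝ → ℝ)
    (ha : ∀ i t, a i t = B i * (Real.exp (κ * t) - 1) + D i * (1 - Real.exp (-α * t)))
    (m : ℝ → ℝ) (hm : ∀ t, m t = (1 - Real.exp (-α * t)) / (1 - Real.exp (-α))) :
    ∀ i, lam i * ∫ t in (0:ℝ)..1, (deriv m t + κ * m t) * deriv (a i) t
      = κ * (lam i * n - 1) / ((n : ℝ) * (1 - Real.exp (-κ)))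
        + α / ((n : ℝ) * (Real.exp α - 1)) + κ / ((n : ℝ) + 1) := by
  intro i
  have hn' : (2 : ℝ) ≤ n := by exact_mod_cast hn
  have hα0 : α ≠ 0 := by
    rw [hα]; exact div_ne_zero (mul_ne_zero hκ.ne' (by linarith)) (by linarith)
  have hlam : lam i ≠ 0 := (hpos i).ne'
  rw [show m = marketStrategy α from funext hm,
    show a i = traderStrategy κ α (B i) (D i) from funext (ha i),
    integral_implementationCost hα0, hB i, hD i, mul_add,
    lam_mul_implementationCost_B_term hκ.ne' hlam (by linarith),
    lam_mul_implementationCost_D_term hα hα0 hlam (by linarith) (by linarith), add_assoc]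

/-- Trader `i`'s implementation cost in equilibrium,
`λᵢ ∫₀¹ (m' + κ m) aᵢ' dt`, equals
`κ(λᵢn - 1)/(n(1-e^{-κ})) + α/(n(e^α-1)) + κ/(n+1)`. -/
theorem stmt_13 (n : ℕ) (hn : 2 ≤ n) (κ : ℝ) (hκ : 0 < κ)
    (α : ℝ) (hα : α = κ * ((n : ℝ) - 1) / ((n : ℝ) + 1))
    (lam : Fin n → ℝ) (hpos : ∀ i, 0 < lam i) (hsum : ∑ i, lam i = 1)
    (B D : Fin n → ℝ)
    (hB : ∀ i, B i = (lam i * n - 1) / (lam i * n * (Real.exp κ - 1)))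
    (hD : ∀ i, D i = 1 / (lam i * n * (1 - Real.exp (-α))))
    (a : Fin n → ℝ → ℝ)
    (ha : ∀ i t, a i t = B i * (Real.exp (κ * t) - 1) + D i * (1 - Real.exp (-α * t)))
    (m : ℝ → ℝ) (hm : ∀ t, m t = (1 - Real.exp (-α * t)) / (1 - Real.exp (-α))) :
    ∀ i, lam i * ∫ t in (0:ℝ)..1, (deriv m t + κ * m t) * deriv (a i) t
      = κ * (lam i * n - 1) / ((n : ℝ) * (1 - Real.exp (-κ)))
        + α / ((n : ℝ) * (Real.exp α - 1)) + κ / ((n : ℝ) + 1) :=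
  stmt_13_general n hn κ hκ α hα lam hpos B D hB hD a ha m hm
end
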